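/- Let F = K((t)) or F = K{{t}} with the higher topology. The multiplication map μ: F × F → F is bounded with respect to the product bornology: if B₁ and B₂ are bounded subsets of F, then μ(B₁ × B₂) = {xy : x ∈ B₁, y ∈ B₂} is a bounded subset of F. -/

import Mathlib

/-!
Common setting: `K` is a characteristic-zero local field (a finite extension of `ℚ_p`)
with ring of integers `𝒪 = {c : K | ‖c‖ ≤ 1}`, maximal ideal `𝔭 = {c : K | ‖c‖ < 1}`,
residue field of cardinality `q` and the absolute value normalised by `‖π‖ = q⁻¹`.
We formalise the two-dimensional local fields `K((t))` (as `LaurentSeries K`) and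
`K{{t}}` (as the submodule `mixedCarrier K` of `ℤ → K`), their higher topologies, and
the relevant functional-analytic notions (lattices, seminorms, boundedness,
c-compactness, compactoidness, completeness for nets, duality).
-/

open Filter Topology Set Pointwise
open scoped Classical

noncomputable section

namespace TwoDimLF

variable (K : Type) [NontriviallyNormedField K]

/-- `K` is a characteristic-zero nonarchimedean local field: the norm is nonarchimedean,
takes the values `q^ℤ` on `K˟` (with a uniformizer of norm `q⁻¹`), `K` is complete, locally
compact, of characteristic zero, and the residue field has exactly `q` elements. -/
structure IsCharZeroLocalField (q : ℕ) : Prop where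
  nonarch : ∀ x y : K, ‖x + y‖ ≤ max ‖x‖ ‖y‖
  one_lt_q : 1 < q
  norm_values : ∀ x : K, x ≠ 0 → ∃ n : ℤ, ‖x‖ = (q : ℝ) ^ (-n)
  exists_uniformizer : ∃ π : K, ‖π‖ = ((q : ℝ))⁻¹
  charZero : CharZero K
  locallyCompact : LocallyCompactSpace K
  complete : CompleteSpace K
  residue_card : ∃ s : Finset K, s.card = q ∧
    ∀ x : K, ‖x‖ ≤ 1 → ∃! y, y ∈ s ∧ ‖x - y‖ < 1

/-- The fractional ideal `𝔭^n ⊆ K` for `n ∈ ℤ ∪ {-∞}`, with the convention `𝔭^(-∞) = K`. -/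
def pB (q : ℕ) (n : WithBot ℤ) : Set K :=
  WithBot.recBotCoe Set.univ (fun m : ℤ => {x : K | ‖x‖ ≤ (q : ℝ) ^ (-m)}) n

/-- The fractional ideal `𝔭^n ⊆ K` for `n ∈ ℤ ∪ {∞}`, with the convention `𝔭^∞ = {0}`. -/
def pT (q : ℕ) (n : WithTop ℤ) : Set K :=
  WithTop.recTopCoe {0} (fun m : ℤ => {x : K | ‖x‖ ≤ (q : ℝ) ^ (-m)}) n

/-- The fractional ideal `𝔭^n ⊆ K` for `n ∈ ℤ ∪ {±∞}`. -/
def pE (q : ℕ) (n : WithBot (WithTop ℤ)) : Set K :=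
  WithBot.recBotCoe Set.univ (fun m : WithTop ℤ => pT K q m) n

/-- `q ^ n ∈ ℝ` for `n ∈ ℤ ∪ {-∞}`, with the convention `q^(-∞) = 0`. -/
def qpow (q : ℕ) (n : WithBot ℤ) : ℝ :=
  WithBot.recBotCoe 0 (fun m : ℤ => (q : ℝ) ^ m) n

/-- `1 - k` for `k ∈ ℤ ∪ {±∞}` (so `1 - (±∞) = ∓∞`). -/
def oneSubE : WithBot (WithTop ℤ) → WithBot (WithTop ℤ) :=
  WithBot.recBotCoe ((⊤ : WithTop ℤ) : WithBot (WithTop ℤ))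
    (WithTop.recTopCoe (⊥ : WithBot (WithTop ℤ))
      (fun z : ℤ => (((1 - z : ℤ) : WithTop ℤ) : WithBot (WithTop ℤ))))

section LCS

variable {V : Type} [AddCommGroup V] [Module K V]

/-- `S` is an `𝒪`-submodule of the `K`-vector space `V`, where `𝒪 = {c : K | ‖c‖ ≤ 1}`
is the ring of integers of `K`. -/
def IsOSubmodule (S : Set V) : Prop :=
  (0 : V) ∈ S ∧ (∀ x ∈ S, ∀ y ∈ S, x + y ∈ S) ∧
    ∀ c : K, ‖c‖ ≤ 1 → ∀ x ∈ S, c • x ∈ S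

/-- `S` is an `𝒪`-lattice in `V`: an `𝒪`-submodule such that every vector is carried
into `S` by some nonzero scalar. -/
def IsLatticeSet (S : Set V) : Prop :=
  IsOSubmodule K S ∧ ∀ v : V, ∃ a : K, a ≠ 0 ∧ a • v ∈ S

/-- A (nonarchimedean) seminorm on the `K`-vector space `V`. -/
def IsSeminorm (N : V → ℝ) : Prop :=
  (∀ (c : K) (v : V), N (c • v) = ‖c‖ * N v) ∧ ∀ v w : V, N (v + w) ≤ max (N v) (N w)

/-- The gauge seminorm of a lattice `Λ ⊆ V`: `‖v‖_Λ = inf {‖a‖ : v ∈ aΛ}`. -/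
def gaugeSeminorm (Λ : Set V) (v : V) : ℝ :=
  sInf {r : ℝ | ∃ a : K, v ∈ a • Λ ∧ r = ‖a‖}

/-- The group topology on `W` determined by a family `B` of neighbourhoods of zero:
neighbourhoods of `x` are generated by the translates `x + U`, `U ∈ B`. -/
def addTopologyOf {W : Type} [AddCommGroup W] (B : Set (Set W)) : TopologicalSpace W :=
  TopologicalSpace.mkOfNhds fun x => Filter.map (fun v => x + v) (⨅ U ∈ B, Filter.principal U)

/-- `B` is (Von-Neumann) bounded for the locally convex topology `τ`: every open lattice
absorbs it. -/
def IsVNBounded (τ : TopologicalSpace V) (B : Set V) : Prop :=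
  ∀ Λ : Set V, IsLatticeSet K Λ → IsOpen[τ] Λ → ∃ a : K, B ⊆ a • Λ

/-- The `𝒪`-submodule `A ⊆ V` is c-compact: for every decreasing filtered family of open
lattices `L i`, the canonical map `A → lim A/(L i ∩ A)` is surjective (phrased via
compatible families of representatives). -/
def IsCCompact (τ : TopologicalSpace V) (A : Set V) : Prop :=
  ∀ (ι : Type) (L : ι → Set V),
    (∀ i, IsLatticeSet K (L i) ∧ IsOpen[τ] (L i)) →
    (∀ i j, ∃ k, L k ⊆ L i ∧ L k ⊆ L j) →
    ∀ x : ι → V, (∀ i, x i ∈ A) →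
      (∀ i j, L j ⊆ L i → x j - x i ∈ L i) →
      ∃ a ∈ A, ∀ i, a - x i ∈ L i

/-- The `𝒪`-submodule `A ⊆ V` is compactoid: for every open lattice `Λ` there are finitely
many vectors `v₁, …, v_m ∈ V` with `A ⊆ Λ + 𝒪v₁ + ⋯ + 𝒪v_m`. -/
def IsCompactoid (τ : TopologicalSpace V) (A : Set V) : Prop :=
  ∀ Λ : Set V, IsLatticeSet K Λ → IsOpen[τ] Λ →
    ∃ (m : ℕ) (v : Fin m → V),
      A ⊆ {u : V | ∃ l ∈ Λ, ∃ c : Fin m → K, (∀ j, ‖c j‖ ≤ 1) ∧ u = l + ∑ j, c j • v j}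

/-- `A ⊆ V` is complete: every Cauchy net with values in `A` converges to a point of `A`
(for the topology `τ`). -/
def IsNetComplete (τ : TopologicalSpace V) (A : Set V) : Prop :=
  ∀ (ι : Type) [Preorder ι] [Nonempty ι],
    (∀ i j : ι, ∃ k, i ≤ k ∧ j ≤ k) →
    ∀ x : ι → V, (∀ i, x i ∈ A) →
      (∀ U ∈ @nhds V τ 0, ∃ i0, ∀ j ≥ i0, ∀ k ≥ i0, x j - x k ∈ U) →
      ∃ a ∈ A, Filter.Tendsto x Filter.atTop (@nhds V τ a)

/-- `τ` makes `V` a locally convex topological `K`-vector space: it is a vector-space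
topology whose filter of neighbourhoods of zero admits a basis of lattices. -/
def IsLCTVS (τ : TopologicalSpace V) : Prop :=
  @IsTopologicalAddGroup V τ _ ∧ @ContinuousSMul K V _ _ τ ∧
    ∀ S ∈ @nhds V τ 0, ∃ Λ : Set V, IsLatticeSet K Λ ∧ Λ ∈ @nhds V τ 0 ∧ Λ ⊆ S

/-- The topological dual of `(V, τ)`: continuous `K`-linear forms, as a set of functions. -/
def dualSet (τ : TopologicalSpace V) : Set (V → K) :=
  {l | IsLinearMap K l ∧ @Continuous V K τ _ l}

/-- Basic neighbourhoods of zero for the `c`-topology on `V → K`: uniform convergence on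
compactoid `𝒪`-submodules. -/
def cTopBasic (τ : TopologicalSpace V) : Set (Set (V → K)) :=
  {S | ∃ (B : Set V) (ε : ℝ), IsOSubmodule K B ∧ IsCompactoid K τ B ∧ 0 < ε ∧
    S = {l : V → K | ∀ x ∈ B, ‖l x‖ ≤ ε}}

/-- The `c`-topology (uniform convergence on compactoid `𝒪`-submodules) on `V → K`. -/
def cTop (τ : TopologicalSpace V) : TopologicalSpace (V → K) :=
  addTopologyOf (cTopBasic K τ)

/-- The pseudo-polar `A^p = {l ∈ V' : |l(v)| < 1 for all v ∈ A}`. -/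
def pseudoPolar (τ : TopologicalSpace V) (A : Set V) : Set (V → K) :=
  {l | l ∈ dualSet K τ ∧ ∀ v ∈ A, ‖l v‖ < 1}

/-- The pseudo-bipolar `A^{pp} = {v ∈ V : |l(v)| < 1 for all l ∈ A^p}`. -/
def pseudoBipolar (τ : TopologicalSpace V) (A : Set V) : Set V :=
  {v | ∀ l ∈ pseudoPolar K τ A, ‖l v‖ < 1}

end LCS

/-! ### The equal characteristic field `K((t))` -/

/-- Basic neighbourhoods of zero for the higher topology on `K((t))`:
`Σ U_i t^i` where each `U_i` is an open neighbourhood of `0` in `K` and `U_i = K` for all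
sufficiently large `i`. -/
def laurentBasic : Set (Set (LaurentSeries K)) :=
  {S | ∃ U : ℤ → Set K, (∀ i, IsOpen (U i) ∧ (0 : K) ∈ U i) ∧
    (∃ N : ℤ, ∀ i, N ≤ i → U i = Set.univ) ∧
    S = {f : LaurentSeries K | ∀ i, f.coeff i ∈ U i}}

/-- The higher topology on `K((t))`. -/
def laurentTop : TopologicalSpace (LaurentSeries K) := addTopologyOf (laurentBasic K)

/-- `Λ = Σ_{i∈ℤ} 𝔭^{n_i} t^i ⊆ K((t))` for a sequence `(n_i) ⊆ ℤ ∪ {-∞}`. -/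
def laurentLambda (q : ℕ) (n : ℤ → WithBot ℤ) : Set (LaurentSeries K) :=
  {f | ∀ i, f.coeff i ∈ pB K q (n i)}

/-- `B = Σ_{i∈ℤ} 𝔭^{k_i} t^i ⊆ K((t))` for a sequence `(k_i) ⊆ ℤ ∪ {∞}`. -/
def laurentPT (q : ℕ) (k : ℤ → WithTop ℤ) : Set (LaurentSeries K) :=
  {f | ∀ i, f.coeff i ∈ pT K q (k i)}

/-- `A = Σ_{i∈ℤ} 𝔭^{k_i} t^i ⊆ K((t))` for a sequence `(k_i) ⊆ ℤ ∪ {±∞}`. -/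
def laurentPE (q : ℕ) (k : ℤ → WithBot (WithTop ℤ)) : Set (LaurentSeries K) :=
  {f | ∀ i, f.coeff i ∈ pE K q (k i)}

/-- The admissible seminorm `‖Σ x_i t^i‖ = max_i ‖x_i‖ q^{n_i}` on `K((t))`. -/
def laurentSeminorm (q : ℕ) (n : ℤ → WithBot ℤ) (f : LaurentSeries K) : ℝ :=
  sSup {r : ℝ | ∃ i : ℤ, r = ‖f.coeff i‖ * qpow q (n i)}

/-- The ring of integers `K[[t]] ⊆ K((t))`. -/
def laurentIntegers : Set (LaurentSeries K) := {f | ∀ i, i < 0 → f.coeff i = 0}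

/-- The rank-two ring of integers `𝒪 + tK[[t]] ⊆ K((t))`. -/
def laurentRankTwo : Set (LaurentSeries K) :=
  {f | (∀ i, i < 0 → f.coeff i = 0) ∧ ‖f.coeff 0‖ ≤ 1}

/-- The pairing `γ(x)(y) = π₀(xy) = Σ_i x_i y_{-i}` on `K((t))`. -/
def laurentPairing (x y : LaurentSeries K) : K := ∑' i : ℤ, x.coeff i * y.coeff (-i)

/-! ### The mixed characteristic field `K{{t}}` -/

/-- The underlying `K`-vector space of `K{{t}}`: functions `x : ℤ → K` (coefficients of
`Σ x_i t^i`) with `inf_i v_K(x_i) > -∞` (i.e. bounded norms) and `x_i → 0` as `i → -∞`. -/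
def mixedCarrier : Submodule K (ℤ → K) where
  carrier := {x | (∃ C : ℝ, ∀ i, ‖x i‖ ≤ C) ∧ Filter.Tendsto x Filter.atBot (nhds (0 : K))}
  zero_mem' := ⟨⟨0, fun i => by simp⟩, tendsto_const_nhds⟩
  add_mem' := by
    rintro x y ⟨⟨C, hC⟩, hx⟩ ⟨⟨D, hD⟩, hy⟩
    refine ⟨⟨C + D, fun i => (norm_add_le _ _).trans (add_le_add (hC i) (hD i))⟩, ?_⟩
    have h2 := hx.add hy
    rw [add_zero] at h2
    exact h2
  smul_mem' := by
    rintro c x ⟨⟨C, hC⟩, hx⟩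
    refine ⟨⟨‖c‖ * C, fun i => ?_⟩, ?_⟩
    · have h : ‖(c • x) i‖ = ‖c‖ * ‖x i‖ := by simp [norm_smul]
      rw [h]
      exact mul_le_mul_of_nonneg_left (hC i) (norm_nonneg c)
    · have h2 := hx.const_smul c
      rw [smul_zero] at h2
      exact h2

/-- The field `K{{t}}`, as a `K`-vector space. -/
abbrev Mt := ↥(mixedCarrier K)

/-- Basic neighbourhoods of zero for the higher topology on `K{{t}}`:
`Σ V_i t^i` where each `V_i` is an open neighbourhood of `0` in `K`, some `𝔭^c` is
contained in every `V_i`, and for every `l` eventually `𝔭^l ⊆ V_i`. -/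
def mixedBasic (q : ℕ) : Set (Set (Mt K)) :=
  {S | ∃ Vs : ℤ → Set K, (∀ i, IsOpen (Vs i) ∧ (0 : K) ∈ Vs i) ∧
    (∃ c : ℤ, ∀ i, {x : K | ‖x‖ ≤ (q : ℝ) ^ (-c)} ⊆ Vs i) ∧
    (∀ l : ℤ, ∃ i0 : ℤ, ∀ i, i0 ≤ i → {x : K | ‖x‖ ≤ (q : ℝ) ^ (-l)} ⊆ Vs i) ∧
    S = {f : Mt K | ∀ i, f.1 i ∈ Vs i}}

/-- The higher topology on `K{{t}}`. -/
def mixedTop (q : ℕ) : TopologicalSpace (Mt K) := addTopologyOf (mixedBasic K q)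

/-- `Λ = Σ_{i∈ℤ} 𝔭^{n_i} t^i ⊆ K{{t}}` for a sequence `(n_i) ⊆ ℤ ∪ {-∞}`. -/
def mixedLambda (q : ℕ) (n : ℤ → WithBot ℤ) : Set (Mt K) :=
  {f | ∀ i, f.1 i ∈ pB K q (n i)}

/-- `B = Σ_{i∈ℤ} 𝔭^{k_i} t^i ⊆ K{{t}}` for a sequence `(k_i) ⊆ ℤ ∪ {∞}`. -/
def mixedPT (q : ℕ) (k : ℤ → WithTop ℤ) : Set (Mt K) :=
  {f | ∀ i, f.1 i ∈ pT K q (k i)}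

/-- `A = Σ_{i∈ℤ} 𝔭^{k_i} t^i ⊆ K{{t}}` for a sequence `(k_i) ⊆ ℤ ∪ {±∞}`. -/
def mixedPE (q : ℕ) (k : ℤ → WithBot (WithTop ℤ)) : Set (Mt K) :=
  {f | ∀ i, f.1 i ∈ pE K q (k i)}

/-- The admissible seminorm `‖Σ x_i t^i‖ = sup_i ‖x_i‖ q^{n_i}` on `K{{t}}`. -/
def mixedSeminorm (q : ℕ) (n : ℤ → WithBot ℤ) (f : Mt K) : ℝ :=
  sSup {r : ℝ | ∃ i : ℤ, r = ‖f.1 i‖ * qpow q (n i)}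

/-- The ring of integers `𝒪{{t}} ⊆ K{{t}}`. -/
def mixedIntegers : Set (Mt K) := {f | ∀ i, ‖f.1 i‖ ≤ 1}

/-- The rank-two ring of integers `Σ_{i<0} 𝔭 t^i + Σ_{i≥0} 𝒪 t^i ⊆ K{{t}}`. -/
def mixedRankTwo (q : ℕ) : Set (Mt K) :=
  {f | (∀ i : ℤ, i < 0 → ‖f.1 i‖ ≤ ((q : ℝ))⁻¹) ∧ ∀ i : ℤ, 0 ≤ i → ‖f.1 i‖ ≤ 1}

/-- The monomial `t^i ∈ K{{t}}`. -/
def mixedT (i : ℤ) : Mt K :=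
  ⟨fun j => if j = i then 1 else 0,
    ⟨⟨1, fun j => by by_cases h : j = i <;> simp [h]⟩, by
      refine (tendsto_const_nhds : Filter.Tendsto (fun _ : ℤ => (0 : K))
        Filter.atBot (nhds 0)).congr' ?_
      filter_upwards [Filter.eventually_le_atBot (i - 1)] with j hj
      have h : j ≠ i := by omega
      simp [h]⟩⟩

/-- Coefficients of the product of two elements of `K{{t}}` (Cauchy product). -/
def mixedMulCoeff (x y : Mt K) : ℤ → K := fun k => ∑' i : ℤ, x.1 i * y.1 (k - i)

/-- Multiplication on `K{{t}}`. -/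
def mixedMul (x y : Mt K) : Mt K :=
  if h : mixedMulCoeff K x y ∈ mixedCarrier K then ⟨_, h⟩ else 0

/-- The pairing `γ(x)(y) = π₀(xy) = Σ_i x_i y_{-i}` on `K{{t}}`. -/
def mixedPairing (x y : Mt K) : K := ∑' i : ℤ, x.1 i * y.1 (-i)

/-!
Boundedness is tested against the open lattices `{f | ‖f_i‖ ≤ w_i}` (constraining only `i < N`
in `K((t))`). In `K((t))` a set is bounded iff its orders are bounded below and its coefficients
below each fixed index are uniformly bounded; in `K{{t}}` iff all its coefficients are uniformly
bounded. A set violating the condition escapes every multiple of a weighted lattice whose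
weights are chosen against its large coefficients; conversely every basic neighbourhood
contains a ball in each coordinate, and in `K((t))` only finitely many coordinates matter. Both
conditions are stable under products by the ultrametric inequality for the Cauchy product.
-/

variable {K}

open Metric

section AddTopology

variable {W : Type} [AddCommGroup W] {Bc : Set (Set W)}

lemma isOpen_addTopologyOf_of_mem {S : Set W} (hS : S ∈ Bc)
    (hadd : ∀ x ∈ S, ∀ y ∈ S, x + y ∈ S) : IsOpen[addTopologyOf Bc] S := fun x hx =>
  Filter.mem_map.2 <| Filter.mem_of_superset
    ((iInf₂_le S hS : _ ≤ 𝓟 S) (Filter.mem_principal_self S)) fun y hy => hadd x hx y hy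

lemma exists_mem_subset_of_isOpen_addTopologyOf (hne : Bc.Nonempty)
    (hinter : ∀ S ∈ Bc, ∀ T ∈ Bc, S ∩ T ∈ Bc) {Λ : Set W}
    (hΛ : IsOpen[addTopologyOf Bc] Λ) (h0 : (0 : W) ∈ Λ) : ∃ S ∈ Bc, S ⊆ Λ := by
  have hbasis := Filter.hasBasis_biInf_principal (s := id)
    (fun S hS T hT => ⟨S ∩ T, hinter S hS T hT, inter_subset_left, inter_subset_right⟩) hne
  exact hbasis.mem_iff.1 (by simpa using hΛ 0 h0)

end AddTopology

lemma exists_ne_zero_norm_mul_le_one (C : ℝ) : ∃ a : K, a ≠ 0 ∧ ‖a‖ * C ≤ 1 := by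
  have hC : (0 : ℝ) < |C| + 1 := by positivity
  obtain ⟨a, ha0, ha⟩ := NormedField.exists_norm_lt K (inv_pos.2 hC)
  refine ⟨a, norm_pos_iff.1 ha0, ?_⟩
  calc ‖a‖ * C ≤ ‖a‖ * (|C| + 1) := by gcongr; linarith [le_abs_self C]
    _ ≤ (|C| + 1)⁻¹ * (|C| + 1) := by gcongr
    _ = 1 := inv_mul_cancel₀ hC.ne'

section WeightedBall

variable {V ι : Type} [AddCommGroup V] [Module K V]

def weightedBall (c : ι → V →ₗ[K] K) (s : Set ι) (w : ι → ℝ) : Set V :=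
  {v | ∀ i ∈ s, ‖c i v‖ ≤ w i}

variable {c : ι → V →ₗ[K] K} {s : Set ι} {w : ι → ℝ}

lemma IsVNBounded.exists_forall_norm_le_mul {τ : TopologicalSpace V} {B : Set V}
    (hB : IsVNBounded K τ B) (hlat : IsLatticeSet K (weightedBall c s w))
    (hopen : IsOpen[τ] (weightedBall c s w)) : ∃ A, ∀ f ∈ B, ∀ i ∈ s, ‖c i f‖ ≤ A * w i := by
  obtain ⟨a, ha⟩ := hB _ hlat hopen
  refine ⟨‖a‖, fun f hf i hi => ?_⟩
  obtain ⟨g, hg, rfl⟩ := ha hf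
  rw [map_smul, norm_smul]
  exact mul_le_mul_of_nonneg_left (hg i hi) (norm_nonneg a)

variable [IsUltrametricDist K]

lemma isOSubmodule_weightedBall (hw : ∀ i ∈ s, 0 ≤ w i) :
    IsOSubmodule K (weightedBall c s w) := by
  refine ⟨fun i hi => by simpa using hw i hi, fun x hx y hy i hi => ?_, fun a ha x hx i hi => ?_⟩
  · rw [map_add]
    exact (IsUltrametricDist.norm_add_le_max _ _).trans (max_le (hx i hi) (hy i hi))
  · rw [map_smul, norm_smul]
    exact (mul_le_of_le_one_left (norm_nonneg _) ha).trans (hx i hi)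

lemma isLatticeSet_weightedBall (hw : ∀ i ∈ s, 0 ≤ w i)
    (habs : ∀ v, ∃ C, ∀ i ∈ s, ‖c i v‖ ≤ C * w i) : IsLatticeSet K (weightedBall c s w) := by
  refine ⟨isOSubmodule_weightedBall hw, fun v => ?_⟩
  obtain ⟨C, hC⟩ := habs v
  obtain ⟨a, ha0, haC⟩ := exists_ne_zero_norm_mul_le_one (K := K) C
  refine ⟨a, ha0, fun i hi => ?_⟩
  rw [map_smul, norm_smul]
  calc ‖a‖ * ‖c i v‖ ≤ ‖a‖ * (C * w i) := mul_le_mul_of_nonneg_left (hC i hi) (norm_nonneg a)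
    _ = (‖a‖ * C) * w i := by ring
    _ ≤ w i := mul_le_of_le_one_left (hw i hi) haC

end WeightedBall

section Laurent

def laurentCoeff (i : ℤ) : LaurentSeries K →ₗ[K] K := HahnSeries.coeff.linearMap i

@[simp]
lemma laurentCoeff_apply (i : ℤ) (f : LaurentSeries K) : laurentCoeff i f = f.coeff i := rfl

lemma univ_mem_laurentBasic : (univ : Set (LaurentSeries K)) ∈ laurentBasic K :=
  ⟨fun _ => univ, fun _ => ⟨isOpen_univ, trivial⟩, ⟨0, fun _ _ => rfl⟩, by simp⟩

lemma laurentBasic_inter {S T : Set (LaurentSeries K)} (hS : S ∈ laurentBasic K)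
    (hT : T ∈ laurentBasic K) : S ∩ T ∈ laurentBasic K := by
  obtain ⟨U, hU, ⟨N, hN⟩, rfl⟩ := hS
  obtain ⟨V, hV, ⟨M, hM⟩, rfl⟩ := hT
  refine ⟨fun i => U i ∩ V i, fun i => ⟨(hU i).1.inter (hV i).1, (hU i).2, (hV i).2⟩,
    ⟨max N M, fun i hi => ?_⟩, ?_⟩
  · show U i ∩ V i = univ
    rw [hN i (le_of_max_le_left hi), hM i (le_of_max_le_right hi), inter_self]
  · ext f
    simp only [mem_inter_iff, mem_ofPred_eq, ← forall_and]

lemma isVNBounded_laurentTop_of {B : Set (LaurentSeries K)} {N : ℤ}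
    (hN : ∀ f ∈ B, (N : WithTop ℤ) ≤ f.orderTop)
    (hC : ∀ M : ℤ, ∃ C, ∀ f ∈ B, ∀ i < M, ‖f.coeff i‖ ≤ C) :
    IsVNBounded K (laurentTop K) B := by
  intro Λ hΛ hopen
  obtain ⟨_, ⟨U, hU, ⟨M, hM⟩, rfl⟩, hSΛ⟩ := exists_mem_subset_of_isOpen_addTopologyOf
    ⟨_, univ_mem_laurentBasic⟩ (fun _ hS _ hT => laurentBasic_inter hS hT) hopen hΛ.1.1
  choose ρ hρ hρU using
    fun i => Metric.nhds_basis_closedBall.mem_iff.1 ((hU i).1.mem_nhds (hU i).2)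
  obtain ⟨C, hC⟩ := hC M
  have hterm : ∀ i ∈ Finset.Ico N M, 0 ≤ |C| / ρ i :=
    fun i _ => div_nonneg (abs_nonneg C) (hρ i).le
  obtain ⟨a, ha⟩ := NormedField.exists_lt_norm K (∑ i ∈ Finset.Ico N M, |C| / ρ i)
  have ha0 : 0 < ‖a‖ := (Finset.sum_nonneg hterm).trans_lt ha
  refine ⟨a, (Set.subset_smul_set_iff₀ (norm_pos_iff.1 ha0)).2 ?_⟩
  rintro _ ⟨f, hf, rfl⟩
  refine hSΛ fun i => ?_
  rw [HahnSeries.coeff_smul, smul_eq_mul]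
  rcases lt_or_ge i N with hiN | hiN
  · rw [HahnSeries.coeff_eq_zero_of_lt_orderTop ((WithTop.coe_lt_coe.2 hiN).trans_le (hN f hf)),
      mul_zero]
    exact (hU i).2
  rcases le_or_gt M i with hiM | hiM
  · rw [hM i hiM]
    trivial
  refine hρU i ?_
  rw [mem_closedBall_zero_iff, norm_mul, norm_inv, inv_mul_le_iff₀ ha0]
  have hCa : |C| / ρ i < ‖a‖ :=
    (Finset.single_le_sum hterm (Finset.mem_Ico.2 ⟨hiN, hiM⟩)).trans_lt ha
  rw [div_lt_iff₀ (hρ i)] at hCa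
  linarith [hC f hf i hiM, le_abs_self C]

variable [IsUltrametricDist K] {w : ℤ → ℝ}

lemma weightedBall_laurentCoeff_mem_laurentBasic (hw : ∀ i, 0 < w i) (N : ℤ) :
    weightedBall laurentCoeff (Iio N) w ∈ laurentBasic K := by
  refine ⟨fun i => if i < N then closedBall 0 (w i) else univ, fun i => ?_,
    ⟨N, fun i hi => if_neg hi.not_gt⟩, ?_⟩
  · dsimp only
    split_ifs
    · exact ⟨IsUltrametricDist.isOpen_closedBall 0 (hw i).ne',
        Metric.mem_closedBall_self (hw i).le⟩
    · exact ⟨isOpen_univ, trivial⟩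
  · ext f
    refine forall_congr' fun i => ?_
    dsimp only
    split_ifs with h <;> simp [h]

lemma isOpen_weightedBall_laurentCoeff (hw : ∀ i, 0 < w i) (N : ℤ) :
    IsOpen[laurentTop K] (weightedBall laurentCoeff (Iio N) w) :=
  isOpen_addTopologyOf_of_mem (weightedBall_laurentCoeff_mem_laurentBasic hw N)
    (isOSubmodule_weightedBall fun i _ => (hw i).le).2.1

lemma isLatticeSet_weightedBall_laurentCoeff (hw : ∀ i, 0 < w i) (N : ℤ) :
    IsLatticeSet K (weightedBall (V := LaurentSeries K) laurentCoeff (Iio N) w) := by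
  refine isLatticeSet_weightedBall (fun i _ => (hw i).le) fun v =>
    ⟨∑ j ∈ Finset.Ico v.order N, ‖v.coeff j‖ / w j, fun i hi => ?_⟩
  have hterm : ∀ j ∈ Finset.Ico v.order N, 0 ≤ ‖v.coeff j‖ / w j :=
    fun j _ => div_nonneg (norm_nonneg _) (hw j).le
  rw [laurentCoeff_apply]
  rcases lt_or_ge i v.order with hi' | hi'
  · rw [HahnSeries.coeff_eq_zero_of_lt_order hi', norm_zero]
    exact mul_nonneg (Finset.sum_nonneg hterm) (hw i).le
  · calc ‖v.coeff i‖ = ‖v.coeff i‖ / w i * w i := (div_mul_cancel₀ _ (hw i).ne').symm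
      _ ≤ _ := mul_le_mul_of_nonneg_right
          (Finset.single_le_sum hterm (Finset.mem_Ico.2 ⟨hi', hi⟩)) (hw i).le

lemma IsVNBounded.laurent_exists_norm_coeff_le {B : Set (LaurentSeries K)}
    (hB : IsVNBounded K (laurentTop K) B) (N : ℤ) :
    ∃ C, ∀ f ∈ B, ∀ i < N, ‖f.coeff i‖ ≤ C := by
  obtain ⟨A, hA⟩ := hB.exists_forall_norm_le_mul
    (isLatticeSet_weightedBall_laurentCoeff (fun _ => one_pos) N)
    (isOpen_weightedBall_laurentCoeff (fun _ => one_pos) N)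
  exact ⟨A, fun f hf i hi => by simpa using hA f hf i hi⟩

lemma IsVNBounded.laurent_exists_le_orderTop {B : Set (LaurentSeries K)}
    (hB : IsVNBounded K (laurentTop K) B) :
    ∃ N : ℤ, ∀ f ∈ B, (N : WithTop ℤ) ≤ f.orderTop := by
  -- weighting `i` by `‖g_i‖ / (|i| + 1)` for some `g ∈ B` with `g_i ≠ 0` forces `|i| + 1 ≤ A`
  have hwit : ∀ i : ℤ, ∃ r : ℝ, 0 < r ∧
      ∀ f ∈ B, f.coeff i ≠ 0 → ∃ g ∈ B, ‖g.coeff i‖ = ((i.natAbs : ℝ) + 1) * r := by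
    intro i
    by_cases h : ∃ f ∈ B, f.coeff i ≠ 0
    · obtain ⟨f, hf, hfi⟩ := h
      exact ⟨‖f.coeff i‖ / (i.natAbs + 1), by positivity, fun _ _ _ => ⟨f, hf, by field_simp⟩⟩
    · exact ⟨1, one_pos, fun f hf hfi => (h ⟨f, hf, hfi⟩).elim⟩
  choose w hw hwg using hwit
  obtain ⟨A, hA⟩ := hB.exists_forall_norm_le_mul (isLatticeSet_weightedBall_laurentCoeff hw 0)
    (isOpen_weightedBall_laurentCoeff hw 0)
  refine ⟨-⌈A⌉₊, fun f hf => HahnSeries.le_orderTop_iff_forall.2 fun i hi => ?_⟩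
  have hi : i < -⌈A⌉₊ := by exact_mod_cast hi
  by_contra hfi
  obtain ⟨g, hg, hgi⟩ := hwg i f hf hfi
  have hle : ((i.natAbs : ℝ) + 1) * w i ≤ A * w i := by
    simpa [hgi] using hA g hg i (show i < 0 by omega)
  have hceil : (⌈A⌉₊ : ℝ) < i.natAbs := by exact_mod_cast (show ⌈A⌉₊ < i.natAbs by omega)
  linarith [le_of_mul_le_mul_right hle (hw i), Nat.le_ceil A]

theorem isVNBounded_laurentTop_iff {B : Set (LaurentSeries K)} :
    IsVNBounded K (laurentTop K) B ↔
      (∃ N : ℤ, ∀ f ∈ B, (N : WithTop ℤ) ≤ f.orderTop) ∧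
        ∀ M : ℤ, ∃ C, ∀ f ∈ B, ∀ i < M, ‖f.coeff i‖ ≤ C :=
  ⟨fun hB => ⟨hB.laurent_exists_le_orderTop, hB.laurent_exists_norm_coeff_le⟩,
    fun ⟨⟨_, hN⟩, hC⟩ => isVNBounded_laurentTop_of hN hC⟩

lemma norm_coeff_mul_le {x y : LaurentSeries K} {N₁ N₂ N : ℤ} {C₁ C₂ : ℝ}
    (hx : (N₁ : WithTop ℤ) ≤ x.orderTop) (hy : (N₂ : WithTop ℤ) ≤ y.orderTop)
    (hxC : ∀ i < N - N₂, ‖x.coeff i‖ ≤ C₁) (hyC : ∀ j < N - N₁, ‖y.coeff j‖ ≤ C₂)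
    {k : ℤ} (hk : k < N) : ‖(x * y).coeff k‖ ≤ C₁ * C₂ := by
  have hC₁ : 0 ≤ C₁ := (norm_nonneg _).trans (hxC (N - N₂ - 1) (by omega))
  have hC₂ : 0 ≤ C₂ := (norm_nonneg _).trans (hyC (N - N₁ - 1) (by omega))
  rw [HahnSeries.coeff_mul]
  refine IsUltrametricDist.norm_sum_le_of_forall_le_of_nonneg (mul_nonneg hC₁ hC₂)
    fun ij hij => ?_
  obtain ⟨hi, hj, rfl⟩ := Finset.mem_antidiagonal.1 hij
  have hi' : N₁ ≤ ij.1 := not_lt.1 fun h =>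
    hi (HahnSeries.le_orderTop_iff_forall.1 hx _ (WithTop.coe_lt_coe.2 h))
  have hj' : N₂ ≤ ij.2 := not_lt.1 fun h =>
    hj (HahnSeries.le_orderTop_iff_forall.1 hy _ (WithTop.coe_lt_coe.2 h))
  rw [norm_mul]
  exact mul_le_mul (hxC _ (by omega)) (hyC _ (by omega)) (norm_nonneg _) hC₁

end Laurent

lemma exists_tendsto_atTop_forall_le (s : ℕ → ℤ) :
    ∃ m : ℤ → ℕ, Tendsto m atTop atTop ∧ ∀ k, m (s k) ≤ k := by
  have hex : ∀ i : ℤ, ∃ k : ℕ, i ≤ s k ∨ i ≤ k := fun i => ⟨i.toNat, Or.inr (Int.self_le_toNat i)⟩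
  refine ⟨fun i => Nat.find (hex i), tendsto_atTop_atTop.2 fun n => ?_,
    fun k => Nat.find_min' _ (Or.inl le_rfl)⟩
  obtain ⟨b, hb⟩ := ((Finset.range n).image s).bddAbove
  refine ⟨max n (b + 1), fun i hi => (Nat.le_find_iff _ _).2 fun k hk => ?_⟩
  have : s k ≤ b := hb (Finset.mem_coe.2 (Finset.mem_image_of_mem s (Finset.mem_range.2 hk)))
  omega

section Mixed

def mixedCoeff (i : ℤ) : Mt K →ₗ[K] K := (LinearMap.proj i).comp (mixedCarrier K).subtype

@[simp]
lemma mixedCoeff_apply (i : ℤ) (f : Mt K) : mixedCoeff i f = f.1 i := rfl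

lemma univ_mem_mixedBasic (q : ℕ) : (univ : Set (Mt K)) ∈ mixedBasic K q :=
  ⟨fun _ => univ, fun _ => ⟨isOpen_univ, trivial⟩, ⟨0, fun _ => subset_univ _⟩,
    fun _ => ⟨0, fun _ _ => subset_univ _⟩, by simp⟩

variable {q : ℕ}

lemma mixedBasic_inter (hq : 1 ≤ q) {S T : Set (Mt K)} (hS : S ∈ mixedBasic K q)
    (hT : T ∈ mixedBasic K q) : S ∩ T ∈ mixedBasic K q := by
  have hq' : (1 : ℝ) ≤ q := by exact_mod_cast hq
  have hball : ∀ {c d : ℤ}, c ≤ d →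
      {x : K | ‖x‖ ≤ (q : ℝ) ^ (-d)} ⊆ {x : K | ‖x‖ ≤ (q : ℝ) ^ (-c)} :=
    fun hcd _ hx => hx.trans (zpow_le_zpow_right₀ hq' (neg_le_neg hcd))
  obtain ⟨U, hU, ⟨c, hc⟩, hUl, rfl⟩ := hS
  obtain ⟨V, hV, ⟨d, hd⟩, hVl, rfl⟩ := hT
  refine ⟨fun i => U i ∩ V i, fun i => ⟨(hU i).1.inter (hV i).1, (hU i).2, (hV i).2⟩,
    ⟨max c d, fun i => subset_inter ((hball (le_max_left c d)).trans (hc i))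
      ((hball (le_max_right c d)).trans (hd i))⟩, fun l => ?_, ?_⟩
  · obtain ⟨i₀, hi₀⟩ := hUl l
    obtain ⟨i₁, hi₁⟩ := hVl l
    exact ⟨max i₀ i₁, fun i hi =>
      subset_inter (hi₀ i (le_of_max_le_left hi)) (hi₁ i (le_of_max_le_right hi))⟩
  · ext f
    simp only [mem_inter_iff, mem_ofPred_eq, ← forall_and]

lemma isVNBounded_mixedTop_of (hq : 1 ≤ q) {B : Set (Mt K)} {C : ℝ}
    (hC : ∀ f ∈ B, ∀ i, ‖f.1 i‖ ≤ C) : IsVNBounded K (mixedTop K q) B := by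
  have hq0 : (0 : ℝ) < q := by exact_mod_cast hq
  intro Λ hΛ hopen
  obtain ⟨_, ⟨V, -, ⟨c, hc⟩, -, rfl⟩, hSΛ⟩ := exists_mem_subset_of_isOpen_addTopologyOf
    ⟨_, univ_mem_mixedBasic q⟩ (fun _ hS _ hT => mixedBasic_inter hq hS hT) hopen hΛ.1.1
  have hqc : (0 : ℝ) < (q : ℝ) ^ c := zpow_pos hq0 c
  obtain ⟨a, ha⟩ := NormedField.exists_lt_norm K (|C| * (q : ℝ) ^ c)
  have ha0 : 0 < ‖a‖ := (mul_nonneg (abs_nonneg C) hqc.le).trans_lt ha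
  refine ⟨a, (Set.subset_smul_set_iff₀ (norm_pos_iff.1 ha0)).2 ?_⟩
  rintro _ ⟨f, hf, rfl⟩
  refine hSΛ fun i => hc i ?_
  change ‖a⁻¹ * f.1 i‖ ≤ (q : ℝ) ^ (-c)
  rw [norm_mul, norm_inv, inv_mul_le_iff₀ ha0, zpow_neg, ← div_eq_mul_inv, le_div_iff₀ hqc]
  exact (mul_le_mul_of_nonneg_right ((hC f hf i).trans (le_abs_self C)) hqc.le).trans ha.le

variable [IsUltrametricDist K]

lemma weightedBall_mixedCoeff_mem_mixedBasic (hq : 1 ≤ q) {m : ℤ → ℕ}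
    (hm : Tendsto m atTop atTop) :
    weightedBall mixedCoeff univ (fun i => (q : ℝ) ^ m i) ∈ mixedBasic K q := by
  have hq' : (1 : ℝ) ≤ q := by exact_mod_cast hq
  have hpos : ∀ i, (0 : ℝ) < (q : ℝ) ^ m i := fun i => pow_pos (by linarith) _
  refine ⟨fun i => closedBall 0 ((q : ℝ) ^ m i), fun i =>
    ⟨IsUltrametricDist.isOpen_closedBall 0 (hpos i).ne', mem_closedBall_self (hpos i).le⟩,
    ⟨0, fun i x hx => mem_closedBall_zero_iff.2 (hx.trans ?_)⟩, fun l => ?_, ?_⟩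
  · simpa using one_le_pow₀ hq'
  · obtain ⟨i₀, hi₀⟩ := tendsto_atTop_atTop.1 hm (-l).toNat
    refine ⟨i₀, fun i hi x hx => mem_closedBall_zero_iff.2 (hx.trans ?_)⟩
    calc (q : ℝ) ^ (-l) ≤ (q : ℝ) ^ ((-l).toNat : ℤ) := zpow_le_zpow_right₀ hq' (Int.self_le_toNat _)
      _ ≤ (q : ℝ) ^ m i := by rw [zpow_natCast]; exact pow_le_pow_right₀ hq' (hi₀ i hi)
  · ext f
    simp [weightedBall]

lemma isOpen_weightedBall_mixedCoeff (hq : 1 ≤ q) {m : ℤ → ℕ} (hm : Tendsto m atTop atTop) :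
    IsOpen[mixedTop K q] (weightedBall mixedCoeff univ (fun i => (q : ℝ) ^ m i)) :=
  isOpen_addTopologyOf_of_mem (weightedBall_mixedCoeff_mem_mixedBasic hq hm)
    (isOSubmodule_weightedBall fun i _ => by positivity).2.1

lemma isLatticeSet_weightedBall_mixedCoeff (hq : 1 ≤ q) (m : ℤ → ℕ) :
    IsLatticeSet K (weightedBall (V := Mt K) mixedCoeff univ (fun i => (q : ℝ) ^ m i)) := by
  have hq' : (1 : ℝ) ≤ q := by exact_mod_cast hq
  refine isLatticeSet_weightedBall (fun i _ => by positivity) fun v => ?_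
  obtain ⟨C, hC⟩ := v.2.1
  exact ⟨C, fun i _ => (hC i).trans
    (le_mul_of_one_le_right ((norm_nonneg _).trans (hC 0)) (one_le_pow₀ hq'))⟩

lemma IsVNBounded.mixed_exists_norm_coeff_le (hq : 1 < q) {B : Set (Mt K)}
    (hB : IsVNBounded K (mixedTop K q) B) : ∃ C, ∀ f ∈ B, ∀ i, ‖f.1 i‖ ≤ C := by
  have hq' : (1 : ℝ) < q := by exact_mod_cast hq
  by_contra! hunb
  choose f hf s hs using fun k : ℕ => hunb ((q : ℝ) ^ (2 * k))
  obtain ⟨m, hm, hms⟩ := exists_tendsto_atTop_forall_le s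
  obtain ⟨A, hA⟩ := hB.exists_forall_norm_le_mul (isLatticeSet_weightedBall_mixedCoeff hq.le m)
    (isOpen_weightedBall_mixedCoeff hq.le hm)
  have hA' : ∀ k, ‖(f k).1 (s k)‖ ≤ A * (q : ℝ) ^ m (s k) :=
    fun k => by simpa using hA (f k) (hf k) (s k) trivial
  have hA0 : 0 ≤ A :=
    nonneg_of_mul_nonneg_left ((norm_nonneg _).trans (hA' 0)) (pow_pos (by linarith) _)
  obtain ⟨k, hk⟩ := pow_unbounded_of_one_lt A hq'
  -- the coefficient at `s k` exceeds `q ^ (2 * k)`, while its weight is at most `q ^ k`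
  have : (q : ℝ) ^ k * (q : ℝ) ^ k < A * (q : ℝ) ^ k :=
    calc (q : ℝ) ^ k * (q : ℝ) ^ k = (q : ℝ) ^ (2 * k) := by ring
      _ < ‖(f k).1 (s k)‖ := hs k
      _ ≤ A * (q : ℝ) ^ m (s k) := hA' k
      _ ≤ A * (q : ℝ) ^ k := mul_le_mul_of_nonneg_left (pow_le_pow_right₀ hq'.le (hms k)) hA0
  exact hk.not_gt (lt_of_mul_lt_mul_right this (by positivity))

theorem isVNBounded_mixedTop_iff (hq : 1 < q) {B : Set (Mt K)} :
    IsVNBounded K (mixedTop K q) B ↔ ∃ C, ∀ f ∈ B, ∀ i, ‖f.1 i‖ ≤ C :=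
  ⟨fun hB => hB.mixed_exists_norm_coeff_le hq, fun ⟨_, hC⟩ => isVNBounded_mixedTop_of hq.le hC⟩

lemma norm_mixedMul_le {x y : Mt K} {C₁ C₂ : ℝ} (hx : ∀ i, ‖x.1 i‖ ≤ C₁)
    (hy : ∀ i, ‖y.1 i‖ ≤ C₂) (k : ℤ) : ‖(mixedMul K x y).1 k‖ ≤ C₁ * C₂ := by
  have hC₁ : 0 ≤ C₁ := (norm_nonneg _).trans (hx 0)
  have hC : 0 ≤ C₁ * C₂ := mul_nonneg hC₁ ((norm_nonneg _).trans (hy 0))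
  unfold mixedMul
  split_ifs
  · refine IsUltrametricDist.norm_tsum_le_of_forall_le_of_nonneg hC fun i => ?_
    rw [norm_mul]
    exact mul_le_mul (hx i) (hy _) (norm_nonneg _) hC₁
  · simpa using hC

end Mixed

/-- For `F = K((t))` and for `F = K{{t}}` with the higher topology, the
multiplication map `μ : F × F → F` is bounded with respect to the product bornology: if `B₁`
and `B₂` are bounded subsets of `F` then `μ(B₁ × B₂) = {xy : x ∈ B₁, y ∈ B₂}` is bounded. -/
theorem statement11 (q : ℕ) (hK : IsCharZeroLocalField K q) :
    (∀ B₁ B₂ : Set (LaurentSeries K),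
      IsVNBounded K (laurentTop K) B₁ → IsVNBounded K (laurentTop K) B₂ →
      IsVNBounded K (laurentTop K) (Set.image2 (fun x y => x * y) B₁ B₂)) ∧
    (∀ B₁ B₂ : Set (Mt K),
      IsVNBounded K (mixedTop K q) B₁ → IsVNBounded K (mixedTop K q) B₂ →
      IsVNBounded K (mixedTop K q) (Set.image2 (mixedMul K) B₁ B₂)) := by
  have : IsUltrametricDist K := .isUltrametricDist_of_forall_norm_add_le_max_norm hK.nonarch
  refine ⟨fun B₁ B₂ h₁ h₂ => ?_, fun B₁ B₂ h₁ h₂ => ?_⟩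
  · rw [isVNBounded_laurentTop_iff] at h₁ h₂ ⊢
    obtain ⟨⟨N₁, hN₁⟩, hC₁⟩ := h₁
    obtain ⟨⟨N₂, hN₂⟩, hC₂⟩ := h₂
    refine ⟨⟨N₁ + N₂, ?_⟩, fun N => ?_⟩
    · rintro _ ⟨x, hx, y, hy, rfl⟩
      rw [HahnSeries.orderTop_mul, WithTop.coe_add]
      exact add_le_add (hN₁ x hx) (hN₂ y hy)
    · obtain ⟨C₁, hxC⟩ := hC₁ (N - N₂)
      obtain ⟨C₂, hyC⟩ := hC₂ (N - N₁)
      refine ⟨C₁ * C₂, ?_⟩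
      rintro _ ⟨x, hx, y, hy, rfl⟩ k hk
      exact norm_coeff_mul_le (hN₁ x hx) (hN₂ y hy) (hxC x hx) (hyC y hy) hk
  · rw [isVNBounded_mixedTop_iff hK.one_lt_q] at h₁ h₂ ⊢
    obtain ⟨C₁, hC₁⟩ := h₁
    obtain ⟨C₂, hC₂⟩ := h₂
    refine ⟨C₁ * C₂, ?_⟩
    rintro _ ⟨x, hx, y, hy, rfl⟩
    exact norm_mixedMul_le (hC₁ x hx) (hC₂ y hy)

end TwoDimLF
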